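/- Let G be a finite group which is not cyclic and let N be a normal subgroup of G with |G : N| = p for some prime p. Then m_{G,N} = (1/|G|)·Σ_{C ≤ N, C cyclic} (1 − χ(T_C(G)))·φ(|C|), where the sum is over all cyclic subgroups C of N. -/

import Mathlib

noncomputable instance subgroupFintype (G : Type*) [Group G] [Finite G] :
    Fintype (Subgroup G) :=
  Fintype.ofFinite _

open Classical in
/-- The Möbius function of the lattice of subgroups of `G`, ordered by inclusion. -/
noncomputable def subgroupMu (G : Type*) [Group G] [Finite G] (X Y : Subgroup G) : ℤ :=
  letI : LocallyFiniteOrder (Subgroup G) := Fintype.toLocallyFiniteOrder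
  IncidenceAlgebra.mu ℤ X Y

open Classical in
/-- Bouc's rational number `m_{G,N} = (1/|G|) · Σ_{X ≤ G, XN = G} |X| · μ(X, G)`. -/
noncomputable def mBouc (G : Type*) [Group G] [Finite G] (N : Subgroup G) : ℚ :=
  (1 / (Nat.card G : ℚ)) *
    ∑ X : Subgroup G, if X ⊔ N = ⊤ then (Nat.card X : ℚ) * ((subgroupMu G X ⊤ : ℤ) : ℚ) else 0

/-- The poset `T_C(G)` of all subgroups `X` of `G` with `C ≤ X`, `X` a proper subgroup
of `G`, and `X` not contained in `N`, ordered by inclusion. -/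
def TCposet (G : Type*) [Group G] (N C : Subgroup G) : Set (Subgroup G) :=
  {X | C ≤ X ∧ X < ⊤ ∧ ¬ X ≤ N}

/-- `chainCount G N C i` is the number `c_i` of strictly increasing chains
`X_0 < X_1 < ⋯ < X_i` of elements of `T_C(G)`. -/
noncomputable def chainCount (G : Type*) [Group G] [Finite G] (N C : Subgroup G) (i : ℕ) : ℕ :=
  Nat.card {s : LTSeries (TCposet G N C) // s.length = i}

/-- The Euler characteristic `χ(T_C(G)) = Σ_{i ≥ 0} (-1)^i c_i` of (the geometric
realization of the nerve of) the poset `T_C(G)`. -/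
noncomputable def eulerCharTC (G : Type*) [Group G] [Finite G] (N C : Subgroup G) : ℤ :=
  ∑ᶠ i : ℕ, (-1 : ℤ) ^ i * chainCount G N C i

/-!
Every element of `G` generates exactly one cyclic subgroup, and a cyclic group `C` has `φ(|C|)`
generators, so `|X| = Σ_{C ≤ X cyclic} φ(|C|)`. As `N` has prime index, `XN = G` just says
`X ≰ N`. Substituting and exchanging the sums turns `|G| · m_{G,N}` into
`Σ_{C cyclic} φ(|C|) · Σ_{X ≥ C, X ≰ N} μ(X, G)`. If `C ≰ N`, the inner sum runs over the whole
interval `[C, G]` and vanishes because `C ≠ G` (`G` is not cyclic). If `C ≤ N`, it is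
`μ(G, G) = 1` plus the sum over `T_C(G)`, a set of proper subgroups closed upwards below `G`, and
for such a set Philip Hall's theorem gives `Σ_{X ∈ T} μ(X, G) = -χ(T)`: grouping the chains of `T`
by their least element `x`, the alternating counts satisfy the recursion
`f(x) = 1 - Σ_{y > x} f(y)` that characterises `-μ(x, G)`.
-/

open Finset
open scoped Nat

section Chains

open Classical

variable {α : Type*} [PartialOrder α] [Fintype α]

noncomputable def chains (T : Set α) (i : ℕ) : Finset (Fin (i + 1) → α) :=
  {f | StrictMono f ∧ ∀ k, f k ∈ T}

noncomputable def chainsFrom (T : Set α) (i : ℕ) (x : α) : Finset (Fin (i + 1) → α) :=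
  {f ∈ chains T i | f 0 = x}

theorem chains_eq_empty_of_card_le (T : Set α) {i : ℕ} (hi : Fintype.card α ≤ i) :
    chains T i = ∅ := by
  refine eq_empty_of_forall_notMem fun f hf => ?_
  have := Fintype.card_le_of_injective f (mem_filter.1 hf).2.1.injective
  simp only [Fintype.card_fin] at this
  omega

theorem card_chains_filter_eq_sum (T : Set α) [DecidablePred (· ∈ T)] (i : ℕ)
    (P : α → Prop) [DecidablePred P] :
    #{f ∈ chains T i | P (f 0)} = ∑ y with y ∈ T ∧ P y, #(chainsFrom T i y) := by
  rw [card_eq_sum_card_fiberwise (f := fun f => f 0) (t := {y | y ∈ T ∧ P y})]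
  · refine sum_congr rfl fun y hy => ?_
    rw [chainsFrom, filter_filter]
    exact congrArg card <| filter_congr fun f _ =>
      ⟨fun h => h.2, fun h => ⟨h ▸ (mem_filter.1 hy).2.2, h⟩⟩
  · intro f hf
    simp only [chains, coe_filter, mem_filter, mem_univ, true_and] at hf ⊢
    exact ⟨hf.1.2 0, hf.2⟩

theorem card_chains_eq_sum (T : Set α) [DecidablePred (· ∈ T)] (i : ℕ) :
    #(chains T i) = ∑ y with y ∈ T, #(chainsFrom T i y) := by
  simpa using card_chains_filter_eq_sum T i (fun _ => True)

theorem card_chainsFrom_zero {T : Set α} {x : α} (hx : x ∈ T) : #(chainsFrom T 0 x) = 1 := by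
  rw [card_eq_one]
  refine ⟨fun _ => x, eq_singleton_iff_unique_mem.2 ⟨?_, fun f hf => ?_⟩⟩
  · simp only [chainsFrom, chains, mem_filter, mem_univ, true_and]
    exact ⟨⟨Subsingleton.strictMono (α := Fin 1) _, fun _ => hx⟩, trivial⟩
  · funext k
    rw [Subsingleton.elim (α := Fin 1) k 0]
    exact (mem_filter.1 hf).2

theorem card_chainsFrom_succ {T : Set α} [DecidablePred (· ∈ T)] {x : α} (hx : x ∈ T)
    (i : ℕ) :
    #(chainsFrom T (i + 1) x) = ∑ y with y ∈ T ∧ x < y, #(chainsFrom T i y) := by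
  rw [← card_chains_filter_eq_sum T i (x < ·)]
  refine card_nbij' Fin.tail (fun g => Fin.cons x g) ?_ ?_ ?_ ?_
  · intro f hf
    simp only [chainsFrom, chains, coe_filter, mem_filter, mem_univ, true_and] at hf ⊢
    obtain ⟨⟨hmono, hmem⟩, rfl⟩ := hf
    exact ⟨⟨hmono.comp Fin.strictMono_succ, fun k => hmem k.succ⟩, hmono (Fin.succ_pos 0)⟩
  · intro g hg
    simp only [chainsFrom, chains, coe_filter, mem_filter, mem_univ, true_and] at hg ⊢
    obtain ⟨⟨hmono, hmem⟩, hxg⟩ := hg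
    have hx_lt (j : Fin (i + 1)) : x < g j := hxg.trans_le (hmono.monotone (Fin.zero_le j))
    exact ⟨⟨Fin.strictMono_cons.2 ⟨hx_lt, hmono⟩, Fin.cases hx hmem⟩, Fin.cons_zero _ _⟩
  · intro f hf
    simp only [chainsFrom, coe_filter] at hf
    simp only [← hf.2, Fin.cons_self_tail]
  · intro g _
    exact Fin.tail_cons _ _

theorem card_ltSeries_eq_card_chains (T : Set α) (i : ℕ) :
    Nat.card {s : LTSeries T // s.length = i} = #(chains T i) := by
  let e : {s : LTSeries T // s.length = i} ≃
      {f : Fin (i + 1) → α // StrictMono f ∧ ∀ k, f k ∈ T} :=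
    { toFun := fun s => ⟨fun k => s.1 (Fin.cast (by rw [s.2]) k),
        fun a b hab => s.1.strictMono (Fin.cast_lt_cast _ |>.2 hab), fun k => (s.1 _).2⟩
      invFun := fun f =>
        ⟨LTSeries.mk i (fun k => ⟨f.1 k, f.2.2 k⟩) fun a b hab => f.2.1 hab, rfl⟩
      left_inv := fun s => Subtype.ext (RelSeries.ext s.2.symm (funext fun k => rfl))
      right_inv := fun f => rfl }
  rw [Nat.card_congr e, Nat.card_eq_fintype_card, Fintype.card_subtype, chains]

noncomputable def orderComplexEulerChar (T : Set α) : ℤ :=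
  ∑ᶠ i : ℕ, (-1) ^ i * (#(chains T i) : ℤ)

theorem orderComplexEulerChar_eq_sum_range (T : Set α) :
    orderComplexEulerChar T =
      ∑ i ∈ range (Fintype.card α + 1), (-1) ^ i * (#(chains T i) : ℤ) := by
  refine finsum_eq_sum_of_support_subset _ fun i hi => ?_
  by_contra hout
  rw [coe_range, Set.mem_Iio, not_lt] at hout
  simp [chains_eq_empty_of_card_le T (by omega : Fintype.card α ≤ i)] at hi

/- The range overshoots the longest possible chain by one, so that dropping its last term
(as in `signedChainsFrom_eq`) loses nothing. -/
noncomputable def signedChainsFrom (T : Set α) (x : α) : ℤ :=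
  ∑ i ∈ range (Fintype.card α + 1), (-1) ^ i * (#(chainsFrom T i x) : ℤ)

theorem orderComplexEulerChar_eq_sum_signedChainsFrom (T : Set α) [DecidablePred (· ∈ T)] :
    orderComplexEulerChar T = ∑ x with x ∈ T, signedChainsFrom T x := by
  simp only [orderComplexEulerChar_eq_sum_range, signedChainsFrom, card_chains_eq_sum,
    Nat.cast_sum, mul_sum]
  exact sum_comm

theorem signedChainsFrom_eq {T : Set α} [DecidablePred (· ∈ T)] {x : α} (hx : x ∈ T) :
    signedChainsFrom T x = 1 - ∑ y with y ∈ T ∧ x < y, signedChainsFrom T y := by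
  have hdrop_last (y : α) :
      ∑ i ∈ range (Fintype.card α), (-1) ^ i * (#(chainsFrom T i y) : ℤ)
        = signedChainsFrom T y := by
    rw [signedChainsFrom, sum_range_succ, chainsFrom, chains_eq_empty_of_card_le T le_rfl]
    simp
  rw [signedChainsFrom, sum_range_succ', card_chainsFrom_zero hx]
  simp only [card_chainsFrom_succ hx, ← hdrop_last, Nat.cast_sum, mul_sum,
    sum_comm (s := range _)]
  simp only [pow_succ, mul_neg_one, neg_mul, sum_neg_distrib]
  ring

variable [OrderTop α] [LocallyFiniteOrder α]

theorem signedChainsFrom_eq_neg_mu {T : Set α} (hT : ∀ x ∈ T, x < ⊤)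
    (hT_up : ∀ x ∈ T, ∀ y < ⊤, x ≤ y → y ∈ T) {x : α} (hx : x ∈ T) :
    signedChainsFrom T x = -IncidenceAlgebra.mu ℤ x ⊤ := by
  induction x using WellFoundedGT.induction with
  | _ x ih =>
  have hxtop := hT x hx
  have habove : ({y | y ∈ T ∧ x < y} : Finset α) = Ioo x ⊤ := by
    ext y
    simp only [mem_filter, mem_univ, true_and, mem_Ioo]
    exact ⟨fun h => ⟨h.2, hT y h.1⟩, fun h => ⟨hT_up x hx y h.2 h.1.le, h.1⟩⟩
  have hih : ∀ y ∈ Ioo x ⊤, signedChainsFrom T y = -IncidenceAlgebra.mu ℤ y ⊤ :=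
    fun y hy => ih y (mem_Ioo.1 hy).1 (hT_up x hx y (mem_Ioo.1 hy).2 (mem_Ioo.1 hy).1.le)
  rw [signedChainsFrom_eq hx, habove, sum_congr rfl hih,
    IncidenceAlgebra.mu_eq_neg_sum_Ioc_of_ne hxtop.ne, ← Ioo_insert_right hxtop,
    sum_insert right_notMem_Ioo, IncidenceAlgebra.mu_self, sum_neg_distrib]
  ring

theorem sum_mu_top_eq_neg_orderComplexEulerChar {T : Set α} [DecidablePred (· ∈ T)]
    (hT : ∀ x ∈ T, x < ⊤) (hT_up : ∀ x ∈ T, ∀ y < ⊤, x ≤ y → y ∈ T) :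
    ∑ x with x ∈ T, IncidenceAlgebra.mu ℤ x ⊤ = -orderComplexEulerChar T := by
  rw [orderComplexEulerChar_eq_sum_signedChainsFrom, ← sum_neg_distrib]
  exact sum_congr rfl fun x hx => by
    rw [signedChainsFrom_eq_neg_mu hT hT_up (mem_filter.1 hx).2, neg_neg]

theorem sum_mu_top_eq_one_sub_orderComplexEulerChar {n : α} (hn : n ≠ ⊤) (c : α) :
    ∑ x with c ≤ x ∧ ¬x ≤ n, IncidenceAlgebra.mu ℤ x ⊤
      = 1 - orderComplexEulerChar {x | c ≤ x ∧ x < ⊤ ∧ ¬x ≤ n} := by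
  set T : Set α := {x | c ≤ x ∧ x < ⊤ ∧ ¬x ≤ n}
  have hsplit :
      ({x | c ≤ x ∧ ¬x ≤ n} : Finset α) = insert ⊤ ({x | x ∈ T} : Finset α) := by
    ext x
    rcases eq_or_lt_of_le (le_top : x ≤ ⊤) with rfl | hx
    · simp [top_le_iff, hn]
    · simp [T, hx, hx.ne]
  rw [hsplit, sum_insert (by simp [T]), IncidenceAlgebra.mu_self,
    sum_mu_top_eq_neg_orderComplexEulerChar (T := T) (fun x hx => hx.2.1)
      fun x hx y hy hxy => ⟨hx.1.trans hxy, hy, fun hyn => hx.2.2 (hxy.trans hyn)⟩]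
  ring

theorem sum_mu_top_eq_zero_of_not_le {c n : α} (hc : c ≠ ⊤) (hcn : ¬c ≤ n) :
    ∑ x with c ≤ x ∧ ¬x ≤ n, IncidenceAlgebra.mu ℤ x ⊤ = 0 := by
  have hIcc : ({x | c ≤ x ∧ ¬x ≤ n} : Finset α) = Icc c ⊤ := by
    ext x
    simp only [mem_filter, mem_univ, true_and, mem_Icc, le_top, and_true]
    exact ⟨And.left, fun hcx => ⟨hcx, fun hxn => hcn (hcx.trans hxn)⟩⟩
  rw [hIcc, IncidenceAlgebra.sum_Icc_mu_left, if_neg hc]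

end Chains

section Subgroups

variable {G : Type*} [Group G]

theorem Subgroup.sup_eq_top_iff_not_le_of_index_prime {N : Subgroup G} (hN : N.index.Prime)
    (X : Subgroup G) : X ⊔ N = ⊤ ↔ ¬X ≤ N := by
  refine ⟨fun h hXN => ?_, fun hXN => ?_⟩
  · rw [sup_eq_right.2 hXN] at h
    rw [h, index_top] at hN
    exact Nat.not_prime_one hN
  · have : N.FiniteIndex := finiteIndex_iff.2 hN.ne_zero
    have hlt : N < X ⊔ N := lt_of_le_of_ne le_sup_right fun h => hXN (h ▸ le_sup_left)
    refine index_eq_one.1 ((hN.eq_one_or_self_of_dvd _ (index_dvd_of_le hlt.le)).resolve_right ?_)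
    exact (index_strictAnti hlt).ne

theorem Subgroup.zpowers_eq_iff_mem_and_orderOf_eq [Finite G] (C : Subgroup G) (g : G) :
    zpowers g = C ↔ g ∈ C ∧ orderOf g = Nat.card C := by
  refine ⟨fun h => ⟨h ▸ mem_zpowers g, h ▸ (Nat.card_zpowers g).symm⟩,
    fun ⟨hg, hord⟩ => ?_⟩
  exact eq_of_le_of_card_ge (zpowers_le.2 hg) (by rw [Nat.card_zpowers, hord])

open Classical in
theorem Subgroup.card_filter_zpowers_eq [Fintype G] (C : Subgroup G) [IsCyclic C] :
    #{g : G | zpowers g = C} = φ (Nat.card C) := by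
  have := Fintype.ofFinite C
  calc #{g : G | zpowers g = C}
      = Fintype.card {c : C // orderOf c = Nat.card C} := by
        rw [← Fintype.card_subtype]
        refine Fintype.card_congr <|
          (Equiv.subtypeEquivRight (zpowers_eq_iff_mem_and_orderOf_eq C)).trans <|
          (Equiv.subtypeSubtypeEquivSubtypeInter (· ∈ C) (orderOf · = Nat.card C)).symm.trans ?_
        exact Equiv.subtypeEquivRight fun c => by rw [orderOf_coe]
    _ = φ (Nat.card C) := by
        rw [Fintype.card_subtype, IsCyclic.card_orderOf_eq_totient Nat.card_eq_fintype_card.dvd]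

open Classical in
theorem Subgroup.card_eq_sum_totient [Finite G] (X : Subgroup G) :
    Nat.card X = ∑ C with C ≤ X ∧ IsCyclic C, φ (Nat.card C) := by
  have := Fintype.ofFinite G
  have hX : Nat.card X = #{g : G | g ∈ X} := by
    rw [Nat.card_eq_fintype_card, ← Fintype.card_subtype]
  rw [hX, card_eq_sum_card_fiberwise (f := zpowers) (t := {C | C ≤ X ∧ IsCyclic C})]
  · refine sum_congr rfl fun C hC => ?_
    obtain ⟨hCX, hC⟩ := (mem_filter.1 hC).2
    rw [← card_filter_zpowers_eq C, filter_filter]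
    exact congrArg card <| filter_congr fun g _ =>
      ⟨fun h => h.2, fun h => ⟨hCX (h ▸ mem_zpowers g), h⟩⟩
  · intro g hg
    simp only [coe_filter, mem_univ, true_and, Set.mem_ofPred_eq] at hg ⊢
    exact ⟨zpowers_le.2 hg, inferInstance⟩

end Subgroups

section Bouc

open Classical

variable {G : Type*} [Group G] [Finite G]

theorem eulerCharTC_eq_orderComplexEulerChar (N C : Subgroup G) :
    eulerCharTC G N C = orderComplexEulerChar (TCposet G N C) := by
  simp only [eulerCharTC, chainCount, card_ltSeries_eq_card_chains, orderComplexEulerChar]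

theorem sum_subgroupMu_eq_one_sub_eulerCharTC {N : Subgroup G} (hN : N ≠ ⊤) (C : Subgroup G) :
    ∑ X with C ≤ X ∧ ¬X ≤ N, subgroupMu G X ⊤ = 1 - eulerCharTC G N C := by
  let : LocallyFiniteOrder (Subgroup G) := Fintype.toLocallyFiniteOrder
  rw [eulerCharTC_eq_orderComplexEulerChar]
  exact sum_mu_top_eq_one_sub_orderComplexEulerChar hN C

theorem sum_subgroupMu_eq_zero {N C : Subgroup G} (hC : C ≠ ⊤) (hCN : ¬C ≤ N) :
    ∑ X with C ≤ X ∧ ¬X ≤ N, subgroupMu G X ⊤ = 0 := by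
  let : LocallyFiniteOrder (Subgroup G) := Fintype.toLocallyFiniteOrder
  exact sum_mu_top_eq_zero_of_not_le hC hCN

theorem mBouc_eq_sum_isCyclic {N : Subgroup G} (hN : N.index.Prime) :
    mBouc G N = 1 / Nat.card G * ∑ C ∈ ({C | IsCyclic C} : Finset (Subgroup G)),
      (φ (Nat.card C) : ℚ) * ∑ X with C ≤ X ∧ ¬X ≤ N, (subgroupMu G X ⊤ : ℚ) := by
  rw [mBouc]
  congr 1
  calc ∑ X, (if X ⊔ N = ⊤ then (Nat.card X : ℚ) * (subgroupMu G X ⊤ : ℚ) else 0)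
      = ∑ X with ¬X ≤ N, (Nat.card X : ℚ) * subgroupMu G X ⊤ := by
        simp only [Subgroup.sup_eq_top_iff_not_le_of_index_prime hN, sum_filter]
    _ = ∑ X with ¬X ≤ N, ∑ C with C ≤ X ∧ IsCyclic C,
          (φ (Nat.card C) : ℚ) * subgroupMu G X ⊤ :=
        sum_congr rfl fun X _ => by rw [Subgroup.card_eq_sum_totient X, Nat.cast_sum, sum_mul]
    _ = ∑ C ∈ ({C | IsCyclic C} : Finset (Subgroup G)), ∑ X with C ≤ X ∧ ¬X ≤ N,
          (φ (Nat.card C) : ℚ) * subgroupMu G X ⊤ :=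
        sum_comm' fun X C => by simp only [mem_filter, mem_univ, true_and]; tauto
    _ = _ := by simp only [mul_sum]

end Bouc

open Classical in
theorem stmt10_general (G : Type*) [Group G] [Finite G] (hG : ¬ IsCyclic G)
    (N : Subgroup G) (p : ℕ) (hp : p.Prime) (hidx : N.index = p) :
    mBouc G N =
      (1 / (Nat.card G : ℚ)) *
        ∑ C : Subgroup G, if C ≤ N ∧ IsCyclic ↥C then
            ((1 - eulerCharTC G N C : ℤ) : ℚ) * (Nat.totient (Nat.card C) : ℚ)
          else 0 := by
  have hN : N.index.Prime := hidx ▸ hp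
  have hNtop : N ≠ ⊤ := fun h => hN.ne_one (h ▸ Subgroup.index_top)
  rw [mBouc_eq_sum_isCyclic hN, sum_filter]
  congr 1
  refine sum_congr rfl fun C _ => ?_
  by_cases hCN : C ≤ N
  · simp only [hCN, true_and, ← Int.cast_sum, sum_subgroupMu_eq_one_sub_eulerCharTC hNtop,
      mul_comm]
  · have hCtop : IsCyclic C → C ≠ ⊤ := fun hC hCtop =>
      hG (isCyclic_of_surjective _ (hCtop ▸ Subgroup.topEquiv).surjective)
    simp only [hCN, false_and, if_false]
    split_ifs with hC
    · rw [← Int.cast_sum, sum_subgroupMu_eq_zero (hCtop hC) hCN, Int.cast_zero, mul_zero]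
    · rfl

open Classical in
/-- If `G` is not cyclic and `N ⊴ G` has prime index `p`, then
`m_{G,N} = (1/|G|) · Σ_{C ≤ N, C cyclic} (1 − χ(T_C(G)))·φ(|C|)`. -/
theorem stmt10 (G : Type*) [Group G] [Finite G] (hG : ¬ IsCyclic G)
    (N : Subgroup G) (hN : N.Normal) (p : ℕ) (hp : p.Prime) (hidx : N.index = p) :
    mBouc G N =
      (1 / (Nat.card G : ℚ)) *
        ∑ C : Subgroup G, if C ≤ N ∧ IsCyclic ↥C then
            ((1 - eulerCharTC G N C : ℤ) : ℚ) * (Nat.totient (Nat.card C) : ℚ)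
          else 0 :=
  stmt10_general G hG N p hp hidx
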